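/- Let ψ: ℕ → [0,1) be a decreasing function and θ = (θ₁,θ₂) ∈ [0,1]². Then for every ℓ ∈ ℕ, the set S×₂(ψ;θ) ∩ [0,1]² is contained in the union, over integers t ≥ ℓ, over integers q with 2^t ≤ q < 2^{t+1}, over integers m ∈ ℤ with 2^{|m|}√(ψ(2^t)) ≤ 1, and over p₁, p₂ ∈ {−1, 0, …, q}, of the rectangles S_θ(q,m,p₁,p₂) consisting of all (x₁,x₂) ∈ [0,1]² with |x₁ − (p₁+θ₁)/q| < 2^m √(2ψ(2^t)) / 2^t and |x₂ − (p₂+θ₂)/q| < 2^{−m} √(2ψ(2^t)) / 2^t. -/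

import Mathlib

noncomputable def distNearestInt (x : ℝ) : ℝ := |x - round x|

def multApprox2 (ψ : ℕ → ℝ) (θ : ℝ × ℝ) : Set (ℝ × ℝ) :=
  {x : ℝ × ℝ |
    {q : ℕ | 0 < q ∧
      distNearestInt (q * x.1 - θ.1) * distNearestInt (q * x.2 - θ.2) < ψ q}.Infinite}

def coverRect (ψ : ℕ → ℝ) (θ : ℝ × ℝ) (t q : ℕ) (m p₁ p₂ : ℤ) : Set (ℝ × ℝ) :=
  {x : ℝ × ℝ | x ∈ Set.Icc ((0 : ℝ), (0 : ℝ)) (1, 1) ∧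
    |x.1 - (p₁ + θ.1) / q| < 2 ^ m * Real.sqrt (2 * ψ (2 ^ t)) / 2 ^ t ∧
    |x.2 - (p₂ + θ.2) / q| < 2 ^ (-m) * Real.sqrt (2 * ψ (2 ^ t)) / 2 ^ t}

/-!
Take `q > 2 ^ ℓ` among the infinitely many good denominators of `x` and let
`2 ^ t ≤ q < 2 ^ (t + 1)`. With `δᵢ = ‖q xᵢ - θᵢ‖ ≤ 1/2`, monotonicity of `ψ` gives
`δ₁ δ₂ < ψ(2 ^ t) = s² / 2` for `s = √(2ψ(2 ^ t))`. If, say, `δ₁ ≥ s`, let `2 ^ m` be the least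
power of two with `δ₁ < 2 ^ m s`; then `2 ^ (m - 1) s ≤ δ₁` forces `δ₂ < 2 ^ (-m) s`, and
`2 ^ m s ≤ 2 δ₁ ≤ 1`. If both `δᵢ < s`, take `m = 0`. Finally `pᵢ = round (q xᵢ - θᵢ)` lies in
`[-1, q]`, and dividing by `q ≥ 2 ^ t` turns `δᵢ` into the distance from `xᵢ` to `(pᵢ + θᵢ) / q`.
-/

theorem round_mem_Icc {α : Type*} [Field α] [LinearOrder α] [IsStrictOrderedRing α]
    [FloorRing α] {a b : ℤ} {y : α} (h : y ∈ Set.Icc (a : α) b) :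
    round y ∈ Set.Icc a b := by
  have round_mono : Monotone (round : α → ℤ) := fun u v huv => by
    simp only [round_eq]
    exact Int.floor_mono (by linarith)
  simpa only [round_intCast] using Set.mem_Icc.mpr ⟨round_mono h.1, round_mono h.2⟩

theorem abs_sub_round_add_div {q : ℝ} (hq : 0 < q) (x θ : ℝ) :
    |x - (round (q * x - θ) + θ) / q| = distNearestInt (q * x - θ) / q := by
  rw [distNearestInt, ← abs_of_pos hq, ← abs_div, abs_of_pos hq]
  congr 1
  field_simp
  ring

theorem exists_pow_two_rect_of_le {s δ₁ δ₂ : ℝ} (hs : 0 < s) (hδ₂ : 0 ≤ δ₂) (hsδ₁ : s ≤ δ₁)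
    (hprod : 2 * (δ₁ * δ₂) < s ^ 2) :
    ∃ m : ℕ, 2 ^ m * s ≤ 2 * δ₁ ∧ δ₁ < 2 ^ m * s ∧ δ₂ < s / 2 ^ m := by
  obtain ⟨n, hlow, hhigh⟩ := exists_nat_pow_near ((one_le_div hs).mpr hsδ₁) one_lt_two
  rw [le_div_iff₀ hs] at hlow
  rw [div_lt_iff₀ hs] at hhigh
  refine ⟨n + 1, by rw [pow_succ]; linarith, hhigh, ?_⟩
  rw [lt_div_iff₀ (by positivity), pow_succ]
  nlinarith [mul_le_mul_of_nonneg_right hlow hδ₂]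

theorem exists_zpow_two_rect {ψ δ₁ δ₂ : ℝ} (hψ : ψ < 1) (hδ₁ : δ₁ ∈ Set.Icc 0 (1 / 2))
    (hδ₂ : δ₂ ∈ Set.Icc 0 (1 / 2)) (hprod : δ₁ * δ₂ < ψ) :
    ∃ m : ℤ, (2 : ℝ) ^ |m| * √ψ ≤ 1 ∧ δ₁ < 2 ^ m * √(2 * ψ) ∧ δ₂ < 2 ^ (-m) * √(2 * ψ) := by
  have hψ₀ : 0 < ψ := (mul_nonneg hδ₁.1 hδ₂.1).trans_lt hprod
  set s := √(2 * ψ)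
  have hs : 0 < s := by positivity
  have hs_sq : s ^ 2 = 2 * ψ := Real.sq_sqrt (by positivity)
  have hψs : √ψ ≤ s := Real.sqrt_le_sqrt (by linarith)
  have hbound : ∀ {n : ℕ} {δ : ℝ}, δ ≤ 1 / 2 → 2 ^ n * s ≤ 2 * δ → (2 : ℝ) ^ n * √ψ ≤ 1 := by
    intro n δ hδ h
    nlinarith [pow_pos (two_pos : (0 : ℝ) < 2) n]
  by_cases h₁ : s ≤ δ₁
  · obtain ⟨n, hn, hδ₁n, hδ₂n⟩ := exists_pow_two_rect_of_le hs hδ₂.1 h₁ (by nlinarith)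
    refine ⟨n, ?_, by simpa using hδ₁n, ?_⟩
    · simpa using hbound hδ₁.2 hn
    · simpa [zpow_neg, div_eq_inv_mul] using hδ₂n
  by_cases h₂ : s ≤ δ₂
  · obtain ⟨n, hn, hδ₂n, hδ₁n⟩ := exists_pow_two_rect_of_le hs hδ₁.1 h₂ (by nlinarith)
    refine ⟨-n, ?_, ?_, by simpa using hδ₂n⟩
    · simpa using hbound hδ₂.2 hn
    · simpa [zpow_neg, div_eq_inv_mul] using hδ₁n
  refine ⟨0, ?_, by simpa using not_le.mp h₁, by simpa using not_le.mp h₂⟩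
  simpa using Real.sqrt_le_one.mpr hψ.le

theorem round_mul_sub_mem_Icc (q : ℕ) {x θ : ℝ} (hx : x ∈ Set.Icc (0 : ℝ) 1)
    (hθ : θ ∈ Set.Icc (0 : ℝ) 1) : round (q * x - θ) ∈ Set.Icc (-1) (q : ℤ) := by
  have hq : (0 : ℝ) ≤ q := q.cast_nonneg
  apply round_mem_Icc
  push_cast
  constructor <;> nlinarith [hx.1, hx.2, hθ.1, hθ.2]

theorem abs_sub_round_add_div_lt {q t : ℕ} (hq : 2 ^ t ≤ q) {x θ c : ℝ}
    (h : distNearestInt (q * x - θ) < c) :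
    |x - (round (q * x - θ) + θ) / q| < c / 2 ^ t := by
  have h2t : (2 : ℝ) ^ t ≤ q := by exact_mod_cast hq
  have hq₀ : (0 : ℝ) < q := (pow_pos two_pos t).trans_le h2t
  rw [abs_sub_round_add_div hq₀]
  calc distNearestInt (q * x - θ) / q ≤ distNearestInt (q * x - θ) / 2 ^ t := by
        gcongr
        exact abs_nonneg _
    _ < c / 2 ^ t := by gcongr

theorem covering_lemma_general (ψ : ℕ → ℝ) (hψ : ∀ q, 0 ≤ ψ q ∧ ψ q < 1) (hψmono : Antitone ψ)
    (θ : ℝ × ℝ) (hθ : θ ∈ Set.Icc ((0 : ℝ), (0 : ℝ)) (1, 1)) (ℓ : ℕ) :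
    multApprox2 ψ θ ∩ Set.Icc (0, 0) (1, 1) ⊆
      ⋃ (t : ℕ) (_ : ℓ ≤ t) (q : ℕ) (_ : 2 ^ t ≤ q ∧ q < 2 ^ (t + 1))
        (m : ℤ) (_ : (2 : ℝ) ^ |m| * Real.sqrt (ψ (2 ^ t)) ≤ 1)
        (p₁ : ℤ) (_ : -1 ≤ p₁ ∧ p₁ ≤ (q : ℤ))
        (p₂ : ℤ) (_ : -1 ≤ p₂ ∧ p₂ ≤ (q : ℤ)),
        coverRect ψ θ t q m p₁ p₂ := by
  rintro x ⟨hx_approx, hx⟩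
  obtain ⟨q, ⟨hq₀, hq_approx⟩, hℓq⟩ := hx_approx.exists_gt (2 ^ ℓ)
  set t := Nat.log 2 q
  have htq : 2 ^ t ≤ q := Nat.pow_log_le_self 2 hq₀.ne'
  have hℓt : ℓ ≤ t := Nat.le_log_of_pow_le one_lt_two hℓq.le
  obtain ⟨m, hm, hm₁, hm₂⟩ := exists_zpow_two_rect (hψ (2 ^ t)).2
    ⟨abs_nonneg _, abs_sub_round _⟩ ⟨abs_nonneg _, abs_sub_round _⟩
    (hq_approx.trans_le (hψmono htq))
  simp only [Set.mem_iUnion]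
  exact ⟨t, hℓt, q, ⟨htq, Nat.lt_pow_succ_log_self one_lt_two q⟩, m, hm,
    _, round_mul_sub_mem_Icc q ⟨hx.1.1, hx.2.1⟩ ⟨hθ.1.1, hθ.2.1⟩,
    _, round_mul_sub_mem_Icc q ⟨hx.1.2, hx.2.2⟩ ⟨hθ.1.2, hθ.2.2⟩,
    hx, abs_sub_round_add_div_lt htq hm₁, abs_sub_round_add_div_lt htq hm₂⟩

theorem covering_lemma (ψ : ℕ → ℝ) (hψ : ∀ q, 0 ≤ ψ q ∧ ψ q < 1) (hψmono : Antitone ψ)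
    (θ : ℝ × ℝ) (hθ : θ ∈ Set.Icc ((0 : ℝ), (0 : ℝ)) (1, 1)) (ℓ : ℕ) (hℓ : 0 < ℓ) :
    multApprox2 ψ θ ∩ Set.Icc (0, 0) (1, 1) ⊆
      ⋃ (t : ℕ) (_ : ℓ ≤ t) (q : ℕ) (_ : 2 ^ t ≤ q ∧ q < 2 ^ (t + 1))
        (m : ℤ) (_ : (2 : ℝ) ^ |m| * Real.sqrt (ψ (2 ^ t)) ≤ 1)
        (p₁ : ℤ) (_ : -1 ≤ p₁ ∧ p₁ ≤ (q : ℤ))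
        (p₂ : ℤ) (_ : -1 ≤ p₂ ∧ p₂ ≤ (q : ℤ)),
        coverRect ψ θ t q m p₁ p₂ :=
  covering_lemma_general ψ hψ hψmono θ hθ ℓ
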